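/- (Direct decoding of whole blocks shared with earlier leaders.) For any integers t ∈ {0,...,K} and r ∈ {1,...,N}, in the proposed interference-alignment scheme, for each user q and each step j ∈ {1,...,min(N−r+1, K−t, g(d_q)−1)}, where g(i) is the index of the leader demanding file F_i: at the end of step j, user q can decode by direct decoding every entire block W_S with |S| = r, d_q ∈ S, and S ∩ {d_{u_1},...,d_{u_j}} ≠ ∅. -/
import Mathlib


open Finset

/-- The ambient GF(2)-vector space with basis indexed by sub-block labels `(S, V)`:
`S` is the block index (a set of files) and `V` the set of users caching the sub-block. -/
abbrev Vec (N K : ℕ) := Finset (Fin N) × Finset (Fin K) → ZMod 2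

/-- The basis vector corresponding to the sub-block `W_{S,V}`. -/
def subBlk (N K : ℕ) (S : Finset (Fin N)) (V : Finset (Fin K)) : Vec N K :=
  Pi.single (S, V) 1

/-- Number of distinct entries `N_e(d)` of a demand vector. -/
def numDistinct {N K : ℕ} (d : Fin K → Fin N) : ℕ := (Finset.univ.image d).card

/-- The demands `{d_{u_1},…,d_{u_j}}` of the first `j` leaders. -/
def leaderDems {N K : ℕ} (d : Fin K → Fin N) (u : ℕ → Fin K) (j : ℕ) : Finset (Fin N) :=
  (Finset.Icc 1 j).image (fun i => d (u i))

/-- The group `G^j_{J,B}` of blocks: blocks `S` of size `r` intersecting the demands of `J`,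
containing at most one of the first `j` leader demands (i.e. containing no 2-subset of
them), and with `S \ d(J) = B`. -/
def groupG {N K : ℕ} (d : Fin K → Fin N) (u : ℕ → Fin K) (r j : ℕ)
    (J : Finset (Fin K)) (B : Finset (Fin N)) : Finset (Finset (Fin N)) :=
  (Finset.powersetCard r (Finset.univ : Finset (Fin N))).filter (fun S =>
    (S ∩ J.image d).Nonempty ∧ (S ∩ leaderDems d u j).card ≤ 1 ∧ S \ J.image d = B)

/-- The multicast term `⊕_{k∈J : d_k∈S} W_{S,J\{k}}` of a block `S` for the user set `J`. -/
def blkTerm {N K : ℕ} (d : Fin K → Fin N) (J : Finset (Fin K)) (S : Finset (Fin N)) : Vec N K :=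
  ∑ k ∈ J.filter (fun k => d k ∈ S), subBlk N K S (J.erase k)

/-- The transmitted linear combination of the group `G^j_{J,B}` whose pilot block
(one of the first `n^j_{J,B}` blocks, demanded by the leader `u_j`) is `P`: the `p`-th
coordinate of the vector of linear combinations in the scheme, where `S_p = P`. -/
def comb {N K : ℕ} (d : Fin K → Fin N) (u : ℕ → Fin K) (r j : ℕ)
    (J : Finset (Fin K)) (B : Finset (Fin N)) (P : Finset (Fin N)) : Vec N K :=
  blkTerm d J P +
    ∑ S ∈ (groupG d u r j J B).filter (fun S => d (u j) ∉ S ∧ (S ∩ P).card = r - 1),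
      blkTerm d J S

/-- `Sum(G^j_{J,B})`: the XOR of all linear combinations transmitted for the group
`G^j_{J,B}` (one per block of the group demanded by the leader `u_j`). -/
def sumG {N K : ℕ} (d : Fin K → Fin N) (u : ℕ → Fin K) (r j : ℕ)
    (J : Finset (Fin K)) (B : Finset (Fin N)) : Vec N K :=
  ∑ P ∈ (groupG d u r j J B).filter (fun S => d (u j) ∈ S), comb d u r j J B P

/-- The set of all linear combinations transmitted by the interference-alignment scheme
during steps `1,…,jmax`. -/
def transmitted {N K : ℕ} (d : Fin K → Fin N) (u : ℕ → Fin K) (r t jmax : ℕ) :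
    Set (Vec N K) :=
  { v | ∃ j ∈ Finset.Icc 1 jmax, ∃ J : Finset (Fin K),
      J.card = t + 1 ∧ u j ∈ J ∧ (∀ i ∈ Finset.Icc 1 (j - 1), u i ∉ J) ∧
      ∃ B : Finset (Fin N), ∃ P ∈ groupG d u r j J B,
        d (u j) ∈ P ∧ v = comb d u r j J B P }

/-- The sub-blocks cached by user `k` under the MAN placement with parameter `t`. -/
def cacheSet (N K r t : ℕ) (k : Fin K) : Set (Vec N K) :=
  { v | ∃ S : Finset (Fin N), ∃ V : Finset (Fin K),
      S.card = r ∧ V.card = t ∧ k ∈ V ∧ v = subBlk N K S V }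

/-- A linear combination `c` contains no interference to a user demanding file `dk`,
relative to a set `Dec` of already known sub-blocks: every sub-block appearing in `c`
either belongs to the demanded file or is already known (hence cancellable). -/
def interfFree {N K : ℕ} (dk : Fin N) (Dec : Set (Vec N K)) (c : Vec N K) : Prop :=
  ∀ S V, c (S, V) ≠ 0 → dk ∈ S ∨ subBlk N K S V ∈ Dec

/-- One round of direct decoding: add every sub-block lying in the span of the known
sub-blocks together with the interference-free transmitted combinations. -/
def ddStep {N K : ℕ} (dk : Fin N) (T : Set (Vec N K)) (Dec : Set (Vec N K)) :
    Set (Vec N K) :=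
  Dec ∪ { v | (∃ S V, v = subBlk N K S V) ∧
    v ∈ Submodule.span (ZMod 2) (Dec ∪ { c ∈ T | interfFree dk Dec c }) }

/-- The set of sub-blocks that user `k` can obtain by direct decoding (treating
interference as noise) from its cache and the transmissions of steps `1,…,jmax`. -/
def directDec {N K : ℕ} (d : Fin K → Fin N) (u : ℕ → Fin K) (r t : ℕ)
    (k : Fin K) (jmax : ℕ) : Set (Vec N K) :=
  ⋃ m : ℕ, (ddStep (d k) (transmitted d u r t jmax))^[m] (cacheSet N K r t k)

/-- The combination `C_{T,H}` from the interference-alignment analysis. -/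
def Cth {N K : ℕ} (d : Fin K → Fin N) (r : ℕ) (T : Finset (Fin K)) (H : Finset (Fin N)) :
    Vec N K :=
  ∑ k1 ∈ T, ∑ S' ∈ (Finset.powersetCard r (T.image d ∪ H)).filter
      (fun S' => H ⊆ S' ∧ d k1 ∈ S'), subBlk N K S' (T.erase k1)

section Infra

variable {N K : ℕ}

lemma subBlk_apply (S : Finset (Fin N)) (V : Finset (Fin K)) (p) :
    subBlk N K S V p = if p = (S, V) then 1 else 0 := by
  simp [subBlk, Pi.single_apply]

lemma erase_injOn {J : Finset (Fin K)} {k k' : Fin K} (hk : k ∈ J) (hk' : k' ∈ J)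
    (h : J.erase k = J.erase k') : k = k' := by
  by_contra hne
  have : k ∈ J.erase k' := Finset.mem_erase.2 ⟨hne, hk⟩
  rw [← h] at this
  exact (Finset.mem_erase.1 this).1 rfl

lemma blkTerm_apply_self (d : Fin K → Fin N) {J : Finset (Fin K)} {S : Finset (Fin N)}
    {k : Fin K} (hk : k ∈ J) (hdk : d k ∈ S) :
    blkTerm d J S (S, J.erase k) = 1 := by
  unfold blkTerm
  rw [Finset.sum_apply]
  rw [Finset.sum_eq_single_of_mem k (Finset.mem_filter.2 ⟨hk, hdk⟩)]
  · simp [subBlk_apply]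
  · intro b hb hbk
    rw [subBlk_apply]
    rw [if_neg]
    intro h
    have h2 : J.erase k = J.erase b := by simpa using (Prod.ext_iff.1 h).2
    exact hbk (erase_injOn (Finset.mem_filter.1 hb).1 hk h2.symm)

lemma blkTerm_apply_ne (d : Fin K → Fin N) {J : Finset (Fin K)} {S S' : Finset (Fin N)}
    {V' : Finset (Fin K)} (h : S' ≠ S) :
    blkTerm d J S (S', V') = 0 := by
  unfold blkTerm
  rw [Finset.sum_apply]
  apply Finset.sum_eq_zero
  intro k hk
  rw [subBlk_apply, if_neg]
  intro hh
  exact h (Prod.ext_iff.1 hh).1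

lemma blkTerm_ne_zero (d : Fin K → Fin N) {J : Finset (Fin K)} {S : Finset (Fin N)}
    {p : Finset (Fin N) × Finset (Fin K)} (h : blkTerm d J S p ≠ 0) :
    p.1 = S ∧ ∃ k ∈ J, d k ∈ S ∧ p.2 = J.erase k := by
  unfold blkTerm at h
  rw [Finset.sum_apply] at h
  obtain ⟨k, hk, hne⟩ := Finset.exists_ne_zero_of_sum_ne_zero h
  rw [subBlk_apply] at hne
  have hp : p = (S, J.erase k) := by
    by_contra hc; rw [if_neg hc] at hne; exact hne rfl
  obtain ⟨hk', hdk⟩ := Finset.mem_filter.1 hk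
  exact ⟨by rw [hp], k, hk', hdk, by rw [hp]⟩

end Infra
section CombLemmas

variable {N K : ℕ}

lemma mem_groupG {d : Fin K → Fin N} {u : ℕ → Fin K} {r j : ℕ} {J : Finset (Fin K)}
    {B S : Finset (Fin N)} :
    S ∈ groupG d u r j J B ↔ S.card = r ∧ (S ∩ J.image d).Nonempty ∧
      (S ∩ leaderDems d u j).card ≤ 1 ∧ S \ J.image d = B := by
  simp [groupG, Finset.mem_powersetCard, Finset.subset_univ, and_assoc]

lemma comb_apply_pilot (d : Fin K → Fin N) (u : ℕ → Fin K) (r j : ℕ)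
    (J : Finset (Fin K)) (B P : Finset (Fin N)) (hPj : d (u j) ∈ P)
    {k : Fin K} (hk : k ∈ J) (hdk : d k ∈ P) :
    comb d u r j J B P (P, J.erase k) = 1 := by
  unfold comb
  rw [Pi.add_apply, Finset.sum_apply, blkTerm_apply_self d hk hdk]
  rw [Finset.sum_eq_zero, add_zero]
  intro S hS
  obtain ⟨_, hS2, _⟩ := Finset.mem_filter.1 hS
  exact blkTerm_apply_ne d (fun h => hS2 (h ▸ hPj))

lemma comb_apply_cross (d : Fin K → Fin N) (u : ℕ → Fin K) (r j : ℕ)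
    (J : Finset (Fin K)) (B P : Finset (Fin N)) (hPj : d (u j) ∈ P)
    {S'' : Finset (Fin N)}
    (hX : S'' ∈ (groupG d u r j J B).filter
      (fun S => d (u j) ∉ S ∧ (S ∩ P).card = r - 1))
    {k : Fin K} (hk : k ∈ J) (hdk : d k ∈ S'') :
    comb d u r j J B P (S'', J.erase k) = 1 := by
  have hdj : d (u j) ∉ S'' := (Finset.mem_filter.1 hX).2.1
  unfold comb
  rw [Pi.add_apply, Finset.sum_apply]
  have hne : S'' ≠ P := fun h => hdj (by rw [h]; exact hPj)
  rw [blkTerm_apply_ne d hne, zero_add]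
  rw [Finset.sum_eq_single_of_mem S'' hX]
  · exact blkTerm_apply_self d hk hdk
  · intro b hb hbne
    exact blkTerm_apply_ne d hbne.symm

lemma comb_ne_zero {d : Fin K → Fin N} {u : ℕ → Fin K} {r j : ℕ}
    {J : Finset (Fin K)} {B P : Finset (Fin N)}
    {p : Finset (Fin N) × Finset (Fin K)} (h : comb d u r j J B P p ≠ 0) :
    (p.1 = P ∨ (p.1 ∈ groupG d u r j J B ∧ d (u j) ∉ p.1 ∧ (p.1 ∩ P).card = r - 1)) ∧
      ∃ k ∈ J, d k ∈ p.1 ∧ p.2 = J.erase k := by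
  unfold comb at h
  rw [Pi.add_apply, Finset.sum_apply] at h
  rcases ne_or_eq (blkTerm d J P p) 0 with h1 | h1
  · obtain ⟨hp1, k, hk, hdk, hp2⟩ := blkTerm_ne_zero d h1
    exact ⟨Or.inl hp1, k, hk, hp1 ▸ hdk, hp2⟩
  · rw [h1, zero_add] at h
    obtain ⟨S, hS, hne⟩ := Finset.exists_ne_zero_of_sum_ne_zero h
    obtain ⟨hp1, k, hk, hdk, hp2⟩ := blkTerm_ne_zero d hne
    obtain ⟨hg, hc1, hc2⟩ := Finset.mem_filter.1 hS
    exact ⟨Or.inr ⟨hp1 ▸ hg, hp1 ▸ hc1, hp1 ▸ hc2⟩, k, hk, hp1 ▸ hdk, hp2⟩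

end CombLemmas
section DecInfra

variable {N K : ℕ}

lemma ddStep_infl (dk : Fin N) (T Dec : Set (Vec N K)) : Dec ⊆ ddStep dk T Dec :=
  Set.subset_union_left

lemma ddStep_mono {dk : Fin N} {T T' Dec Dec' : Set (Vec N K)} (hT : T ⊆ T')
    (hD : Dec ⊆ Dec') : ddStep dk T Dec ⊆ ddStep dk T' Dec' := by
  intro v hv
  rcases hv with hv | ⟨hex, hsp⟩
  · exact Or.inl (hD hv)
  · refine Or.inr ⟨hex, ?_⟩
    refine Submodule.span_mono ?_ hsp
    rintro c (hc | ⟨hcT, hIF⟩)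
    · exact Or.inl (hD hc)
    · exact Or.inr ⟨hT hcT, fun S V h => (hIF S V h).imp id (fun h' => hD h')⟩

lemma iter_mono_idx (dk : Fin N) (T : Set (Vec N K)) (X : Set (Vec N K)) {m n : ℕ}
    (h : m ≤ n) : (ddStep dk T)^[m] X ⊆ (ddStep dk T)^[n] X := by
  induction n with
  | zero => simpa [Nat.le_zero.1 h]
  | succ n ih =>
    rcases Nat.lt_or_ge m (n+1) with h' | h'
    · rw [Function.iterate_succ_apply']
      exact (ih (Nat.lt_succ_iff.1 h')).trans (ddStep_infl dk T _)
    · have : m = n + 1 := le_antisymm h h'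
      subst this; exact subset_rfl

lemma iter_mono_T {dk : Fin N} {T T' : Set (Vec N K)} (hT : T ⊆ T')
    {X X' : Set (Vec N K)} (hX : X ⊆ X') (m : ℕ) :
    (ddStep dk T)^[m] X ⊆ (ddStep dk T')^[m] X' := by
  induction m with
  | zero => simpa
  | succ m ih =>
    rw [Function.iterate_succ_apply', Function.iterate_succ_apply']
    exact ddStep_mono hT ih

lemma transmitted_mono (d : Fin K → Fin N) (u : ℕ → Fin K) (r t : ℕ) {j j' : ℕ}
    (h : j ≤ j') : transmitted d u r t j ⊆ transmitted d u r t j' := by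
  rintro v ⟨i, hi, rest⟩
  exact ⟨i, Finset.mem_Icc.2 ⟨(Finset.mem_Icc.1 hi).1, (Finset.mem_Icc.1 hi).2.trans h⟩, rest⟩

lemma directDec_mono (d : Fin K → Fin N) (u : ℕ → Fin K) (r t : ℕ) (q : Fin K)
    {j j' : ℕ} (h : j ≤ j') : directDec d u r t q j ⊆ directDec d u r t q j' := by
  intro v hv
  obtain ⟨s, ⟨m, rfl⟩, hm⟩ := hv
  exact Set.mem_iUnion.2 ⟨m, iter_mono_T (transmitted_mono d u r t h) subset_rfl m hm⟩

lemma cache_mem_directDec (d : Fin K → Fin N) (u : ℕ → Fin K) (r t : ℕ) (q : Fin K)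
    (jmax : ℕ) {S : Finset (Fin N)} {V : Finset (Fin K)} (hS : S.card = r)
    (hV : V.card = t) (hq : q ∈ V) : subBlk N K S V ∈ directDec d u r t q jmax :=
  Set.mem_iUnion.2 ⟨0, ⟨S, V, hS, hV, hq, rfl⟩⟩

lemma exists_iter_bound (d : Fin K → Fin N) (u : ℕ → Fin K) (r t : ℕ) (q : Fin K)
    (jmax : ℕ) (ps : Finset (Finset (Fin N) × Finset (Fin K)))
    (h : ∀ p ∈ ps, subBlk N K p.1 p.2 ∈ directDec d u r t q jmax) :
    ∃ M, ∀ p ∈ ps, subBlk N K p.1 p.2 ∈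
      (ddStep (d q) (transmitted d u r t jmax))^[M] (cacheSet N K r t q) := by
  classical
  induction ps using Finset.induction with
  | empty => exact ⟨0, by simp⟩
  | @insert a s hnotmem ih =>
    obtain ⟨M, hM⟩ := ih (fun p hp => h p (Finset.mem_insert_of_mem hp))
    obtain ⟨sa, ⟨ma, rfl⟩, hma⟩ := h a (Finset.mem_insert_self a s)
    refine ⟨max M ma, ?_⟩
    intro p hp
    rcases Finset.mem_insert.1 hp with rfl | hp
    · exact iter_mono_idx _ _ _ (le_max_right M ma) hma
    · exact iter_mono_idx _ _ _ (le_max_left M ma) (hM p hp)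

set_option maxHeartbeats 1000000 in
lemma decode_step (d : Fin K → Fin N) (u : ℕ → Fin K) (r t : ℕ) (q : Fin K) (jmax : ℕ)
    (c : Vec N K) (hcT : c ∈ transmitted d u r t jmax)
    (S : Finset (Fin N)) (V : Finset (Fin K)) (hdq : d q ∈ S)
    (h1 : c (S, V) = 1)
    (hother : ∀ p : Finset (Fin N) × Finset (Fin K), p ≠ (S, V) → c p ≠ 0 →
      subBlk N K p.1 p.2 ∈ directDec d u r t q jmax) :
    subBlk N K S V ∈ directDec d u r t q jmax := by
  classical
  have hSVA : (S, V) ∈ Finset.univ.filter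
      (fun p : Finset (Fin N) × Finset (Fin K) => c p ≠ 0) := by
    simp only [Finset.mem_filter, Finset.mem_univ, true_and]
    rw [h1]; exact one_ne_zero
  have hEmem : ∀ p ∈ (Finset.univ.filter
      (fun p : Finset (Fin N) × Finset (Fin K) => c p ≠ 0)).erase (S, V),
      p ≠ (S, V) ∧ c p ≠ 0 := by
    intro p hp
    obtain ⟨hne, hpA⟩ := Finset.mem_erase.1 hp
    exact ⟨hne, (Finset.mem_filter.1 hpA).2⟩
  obtain ⟨M, hM⟩ := exists_iter_bound d u r t q jmax
    ((Finset.univ.filter (fun p : Finset (Fin N) × Finset (Fin K) => c p ≠ 0)).erase (S, V))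
    (fun p hp => hother p (hEmem p hp).1 (hEmem p hp).2)
  have hexp : c = ∑ p ∈ Finset.univ.filter
      (fun p : Finset (Fin N) × Finset (Fin K) => c p ≠ 0), c p • subBlk N K p.1 p.2 := by
    funext p'
    rw [Finset.sum_apply]
    have hthis : ∀ p ∈ Finset.univ.filter
        (fun p : Finset (Fin N) × Finset (Fin K) => c p ≠ 0),
        (c p • subBlk N K p.1 p.2) p' = if p' = p then c p else 0 := by
      intro p _
      rw [Pi.smul_apply, subBlk_apply]
      by_cases h : p' = p <;> simp [h]
    rw [Finset.sum_congr rfl hthis]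
    rw [Finset.sum_ite_eq _ p' (fun p => c p)]
    by_cases h : p' ∈ Finset.univ.filter
        (fun p : Finset (Fin N) × Finset (Fin K) => c p ≠ 0)
    · rw [if_pos h]
    · rw [if_neg h]
      have := Finset.mem_filter.not.1 h
      simp only [Finset.mem_univ, true_and, not_not] at this
      exact this
  have hsum : c = subBlk N K S V + ∑ p ∈ (Finset.univ.filter
      (fun p : Finset (Fin N) × Finset (Fin K) => c p ≠ 0)).erase (S, V),
      c p • subBlk N K p.1 p.2 :=
    calc c = _ := hexp
    _ = _ := by
      rw [← Finset.add_sum_erase _ (fun p => c p • subBlk N K p.1 p.2) hSVA, h1, one_smul]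
  have hcIF : interfFree (d q)
      ((ddStep (d q) (transmitted d u r t jmax))^[M] (cacheSet N K r t q)) c := by
    intro S' V' hne
    by_cases h : (S', V') = (S, V)
    · have hS' : S' = S := congrArg Prod.fst h
      exact Or.inl (by rw [hS']; exact hdq)
    · exact Or.inr (hM (S', V') (Finset.mem_erase.2 ⟨h, by
        simp only [Finset.mem_filter, Finset.mem_univ, true_and]; exact hne⟩))
  have hspan : subBlk N K S V ∈ Submodule.span (ZMod 2)
      (((ddStep (d q) (transmitted d u r t jmax))^[M] (cacheSet N K r t q)) ∪
        { c' ∈ transmitted d u r t jmax | interfFree (d q)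
          ((ddStep (d q) (transmitted d u r t jmax))^[M] (cacheSet N K r t q)) c' }) := by
    have hc : c ∈ Submodule.span (ZMod 2)
        (((ddStep (d q) (transmitted d u r t jmax))^[M] (cacheSet N K r t q)) ∪
          { c' ∈ transmitted d u r t jmax | interfFree (d q)
            ((ddStep (d q) (transmitted d u r t jmax))^[M] (cacheSet N K r t q)) c' }) :=
      Submodule.subset_span (Or.inr ⟨hcT, hcIF⟩)
    have hterms : (∑ p ∈ (Finset.univ.filter
        (fun p : Finset (Fin N) × Finset (Fin K) => c p ≠ 0)).erase (S, V),
        c p • subBlk N K p.1 p.2) ∈ Submodule.span (ZMod 2)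
        (((ddStep (d q) (transmitted d u r t jmax))^[M] (cacheSet N K r t q)) ∪
          { c' ∈ transmitted d u r t jmax | interfFree (d q)
            ((ddStep (d q) (transmitted d u r t jmax))^[M] (cacheSet N K r t q)) c' }) := by
      apply Submodule.sum_mem
      intro p hp
      exact Submodule.smul_mem _ _ (Submodule.subset_span (Or.inl (hM p hp)))
    have heq : subBlk N K S V = c - ∑ p ∈ (Finset.univ.filter
        (fun p : Finset (Fin N) × Finset (Fin K) => c p ≠ 0)).erase (S, V),
        c p • subBlk N K p.1 p.2 := eq_sub_of_add_eq hsum.symm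
    rw [heq]
    exact Submodule.sub_mem _ hc hterms
  have hmem : subBlk N K S V ∈ ddStep (d q) (transmitted d u r t jmax)
      ((ddStep (d q) (transmitted d u r t jmax))^[M] (cacheSet N K r t q)) :=
    Set.mem_union_right _ ⟨⟨S, V, rfl⟩, hspan⟩
  rw [← Function.iterate_succ_apply' (ddStep (d q) (transmitted d u r t jmax)) M (cacheSet N K r t q)] at hmem
  exact Set.mem_iUnion.2 ⟨M + 1, hmem⟩

end DecInfra
section Comb2

variable {N K : ℕ}

lemma leaderDems_succ (d : Fin K → Fin N) (u : ℕ → Fin K) {j : ℕ} (hj : 1 ≤ j) :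
    leaderDems d u j = insert (d (u j)) (leaderDems d u (j - 1)) := by
  unfold leaderDems
  rw [show Finset.Icc 1 j = insert j (Finset.Icc 1 (j - 1)) by
    ext x; simp only [Finset.mem_Icc, Finset.mem_insert]; omega]
  rw [Finset.image_insert]

lemma leaderDems_mono (d : Fin K → Fin N) (u : ℕ → Fin K) {a b : ℕ} (h : a ≤ b) :
    leaderDems d u a ⊆ leaderDems d u b :=
  Finset.image_subset_image (Finset.Icc_subset_Icc_right h)

lemma mem_leaderDems {d : Fin K → Fin N} {u : ℕ → Fin K} {x : Fin N} {j : ℕ} :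
    x ∈ leaderDems d u j ↔ ∃ i, 1 ≤ i ∧ i ≤ j ∧ d (u i) = x := by
  simp [leaderDems, Finset.mem_Icc, and_assoc]

/-- Uniqueness of the cross block containing `δ` for the pilot `insert dj (S''.erase δ)`. -/
lemma cross_unique {r : ℕ} {S' S'' : Finset (Fin N)} {δ dj : Fin N}
    (hδdj : δ ≠ dj) (hδS'' : δ ∈ S'') (hdjS'' : dj ∉ S'') (hS''card : S''.card = r)
    (hS'card : S'.card = r) (hdjS' : dj ∉ S') (hδS' : δ ∈ S')
    (hcard : (S' ∩ insert dj (S''.erase δ)).card = r - 1) :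
    S' = S'' := by
  set P := insert dj (S''.erase δ) with hP
  have hr1 : 1 ≤ r := hS''card ▸ Finset.card_pos.2 ⟨δ, hδS''⟩
  have hPcard : P.card = r := by
    rw [hP, Finset.card_insert_of_notMem (fun h => hdjS'' (Finset.mem_of_mem_erase h)),
      Finset.card_erase_of_mem hδS'', hS''card]
    omega
  have hδP : δ ∉ P := by
    rw [hP]
    simp only [Finset.mem_insert, Finset.mem_erase]
    push_neg
    exact ⟨hδdj, fun h => absurd rfl h⟩
  have hdjP : dj ∈ P := Finset.mem_insert_self _ _
  have h1 : (P \ S').card = 1 := by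
    have h := Finset.card_sdiff_add_card_inter P S'
    rw [Finset.inter_comm] at h
    omega
  have h2 : (S' \ P).card = 1 := by
    have h := Finset.card_sdiff_add_card_inter S' P
    omega
  have hPdiff : P \ S' = {dj} := by
    obtain ⟨a, ha⟩ := Finset.card_eq_one.1 h1
    have : dj ∈ P \ S' := Finset.mem_sdiff.2 ⟨hdjP, hdjS'⟩
    rw [ha] at this ⊢
    rw [Finset.mem_singleton.1 this]
  have hSdiff : S' \ P = {δ} := by
    obtain ⟨a, ha⟩ := Finset.card_eq_one.1 h2
    have : δ ∈ S' \ P := Finset.mem_sdiff.2 ⟨hδS', hδP⟩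
    rw [ha] at this ⊢
    rw [Finset.mem_singleton.1 this]
  ext x
  constructor
  · intro hx
    by_cases hxP : x ∈ P
    · rcases Finset.mem_insert.1 hxP with rfl | hxe
      · exact absurd hx hdjS'
      · exact Finset.mem_of_mem_erase hxe
    · have : x ∈ S' \ P := Finset.mem_sdiff.2 ⟨hx, hxP⟩
      rw [hSdiff, Finset.mem_singleton] at this
      rw [this]; exact hδS''
  · intro hx
    by_cases hxδ : x = δ
    · rw [hxδ]; exact hδS'
    · have hxP : x ∈ P := Finset.mem_insert_of_mem (Finset.mem_erase.2 ⟨hxδ, hx⟩)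
      by_contra hxS'
      have : x ∈ P \ S' := Finset.mem_sdiff.2 ⟨hxP, hxS'⟩
      rw [hPdiff, Finset.mem_singleton] at this
      rw [this] at hx
      exact hdjS'' hx

end Comb2
section SingleComb

variable {N K : ℕ}

lemma singleComb (r t : ℕ) (d : Fin K → Fin N) (u : ℕ → Fin K) (q : Fin K)
    (j' jmax : ℕ) (h1j : 1 ≤ j') (hjm : j' ≤ jmax)
    (hqi : ∀ i, 1 ≤ i → i ≤ j' → u i ≠ q)
    (hdjq : d (u j') ≠ d q)
    (V : Finset (Fin K)) (hV : V.card = t) (hqV : q ∉ V) (hujV : u j' ∈ V)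
    (hprev : ∀ i, 1 ≤ i → i < j' → u i ∉ V)
    (S'' : Finset (Fin N)) (hScard : S''.card = r) (hdqS : d q ∈ S'')
    (hdjS : d (u j') ∉ S'') (hSL : S'' ∩ leaderDems d u j' = ∅) :
    subBlk N K S'' V ∈ directDec d u r t q jmax := by
  classical
  set J := insert q V with hJ
  set P := insert (d (u j')) (S''.erase (d q)) with hP
  set B := P \ J.image d with hB
  have hqJ : q ∈ J := Finset.mem_insert_self _ _
  have hujJ : u j' ∈ J := Finset.mem_insert_of_mem hujV
  have hJcard : J.card = t + 1 := by rw [hJ, Finset.card_insert_of_notMem hqV, hV]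
  have hr1 : 1 ≤ r := hScard ▸ Finset.card_pos.2 ⟨_, hdqS⟩
  have hdqP : d q ∉ P := by
    rw [hP]
    simp only [Finset.mem_insert, Finset.mem_erase]
    push_neg
    exact ⟨fun h => hdjq h.symm, fun h => absurd rfl h⟩
  have hdjP : d (u j') ∈ P := Finset.mem_insert_self _ _
  have hPcard : P.card = r := by
    rw [hP, Finset.card_insert_of_notMem (fun h => hdjS (Finset.mem_of_mem_erase h)),
      Finset.card_erase_of_mem hdqS, hScard]
    omega
  have hdqD : d q ∈ J.image d := Finset.mem_image.2 ⟨q, hqJ, rfl⟩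
  have hdjD : d (u j') ∈ J.image d := Finset.mem_image.2 ⟨u j', hujJ, rfl⟩
  have hPgroup : P ∈ groupG d u r j' J B := by
    refine mem_groupG.2 ⟨hPcard, ⟨d (u j'), Finset.mem_inter.2 ⟨hdjP, hdjD⟩⟩, ?_, rfl⟩
    have hsub : P ∩ leaderDems d u j' ⊆ {d (u j')} := by
      intro x hx
      obtain ⟨hxP, hxL⟩ := Finset.mem_inter.1 hx
      rcases Finset.mem_insert.1 hxP with rfl | hxe
      · exact Finset.mem_singleton_self _
      · exfalso
        have : x ∈ S'' ∩ leaderDems d u j' :=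
          Finset.mem_inter.2 ⟨Finset.mem_of_mem_erase hxe, hxL⟩
        rw [hSL] at this
        exact absurd this (Finset.notMem_empty x)
    calc (P ∩ leaderDems d u j').card ≤ ({d (u j')} : Finset (Fin N)).card :=
          Finset.card_le_card hsub
      _ = 1 := Finset.card_singleton _
  have hcT : comb d u r j' J B P ∈ transmitted d u r t jmax := by
    refine ⟨j', Finset.mem_Icc.2 ⟨h1j, hjm⟩, J, hJcard, hujJ, ?_, B, P, hPgroup, hdjP, rfl⟩
    intro i hi
    obtain ⟨hi1, hi2⟩ := Finset.mem_Icc.1 hi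
    rw [hJ]
    simp only [Finset.mem_insert]
    push_neg
    exact ⟨hqi i hi1 (by omega), hprev i hi1 (by omega)⟩
  -- S'' is a cross block
  have hSP : S'' ∩ P = S''.erase (d q) := by
    ext x
    simp only [Finset.mem_inter, hP, Finset.mem_insert, Finset.mem_erase]
    constructor
    · rintro ⟨hxS, rfl | ⟨hxδ, hxS'⟩⟩
      · exact absurd hxS hdjS
      · exact ⟨hxδ, hxS⟩
    · rintro ⟨hxδ, hxS⟩
      exact ⟨hxS, Or.inr ⟨hxδ, hxS⟩⟩
  have hBeq : S'' \ J.image d = B := by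
    rw [hB, hP]
    ext x
    simp only [Finset.mem_sdiff, Finset.mem_insert, Finset.mem_erase]
    constructor
    · rintro ⟨hxS, hxD⟩
      exact ⟨Or.inr ⟨fun h => hxD (h ▸ hdqD), hxS⟩, hxD⟩
    · rintro ⟨rfl | ⟨_, hxS⟩, hxD⟩
      · exact absurd hdjD hxD
      · exact ⟨hxS, hxD⟩
  have hS''group : S'' ∈ groupG d u r j' J B := by
    refine mem_groupG.2 ⟨hScard, ⟨d q, Finset.mem_inter.2 ⟨hdqS, hdqD⟩⟩, ?_, hBeq⟩
    rw [hSL]; simp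
  have hcross : S'' ∈ (groupG d u r j' J B).filter
      (fun S => d (u j') ∉ S ∧ (S ∩ P).card = r - 1) := by
    refine Finset.mem_filter.2 ⟨hS''group, hdjS, ?_⟩
    rw [hSP, Finset.card_erase_of_mem hdqS, hScard]
  have hVJ : V = J.erase q := by rw [hJ, Finset.erase_insert hqV]
  have h1 : comb d u r j' J B P (S'', V) = 1 := by
    rw [hVJ]
    exact comb_apply_cross d u r j' J B P hdjP hcross hqJ hdqS
  refine decode_step d u r t q jmax _ hcT S'' V hdqS h1 ?_
  intro p hne hcne
  obtain ⟨hdisj, k, hkJ, hdkp, hp2⟩ := comb_ne_zero hcne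
  rcases Finset.mem_insert.1 hkJ with rfl | hkV
  · -- k = q
    have hVp : p.2 = V := by rw [hp2, ← hVJ]
    rcases hdisj with hp1 | ⟨hg, hdjp, hcard⟩
    · exact absurd (hp1 ▸ hdkp) hdqP
    · have hp1S : p.1 = S'' := by
        refine cross_unique (fun h => hdjq h.symm) hdqS hdjS hScard
          (mem_groupG.1 hg).1 hdjp hdkp ?_
        rw [← hP]; exact hcard
      exact absurd (Prod.ext hp1S hVp) hne
  · -- k ∈ V : cached
    have hkq : k ≠ q := fun h => hqV (h ▸ hkV)
    have hqp2 : q ∈ p.2 := by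
      rw [hp2]; exact Finset.mem_erase.2 ⟨hkq.symm, hqJ⟩
    have hp2card : p.2.card = t := by
      rw [hp2, Finset.card_erase_of_mem hkJ, hJcard]
      omega
    have hp1card : p.1.card = r := by
      rcases hdisj with hp1 | ⟨hg, _, _⟩
      · rw [hp1, hPcard]
      · exact (mem_groupG.1 hg).1
    exact cache_mem_directDec d u r t q jmax hp1card hp2card hqp2

end SingleComb
section CaseOne

variable {N K : ℕ}

lemma caseOne (r t : ℕ) (d : Fin K → Fin N) (u : ℕ → Fin K) (q : Fin K)
    (j jmax : ℕ) (h1j : 1 ≤ j) (hjm : j ≤ jmax)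
    (hqi : ∀ i, 1 ≤ i → i ≤ j → u i ≠ q)
    (hdjq : d (u j) ≠ d q)
    (V : Finset (Fin K)) (hV : V.card = t) (hqV : q ∉ V) (hujV : u j ∈ V)
    (hprev : ∀ i, 1 ≤ i → i < j → u i ∉ V)
    (S : Finset (Fin N)) (hS : S.card = r) (hdqS : d q ∈ S) (hdjS : d (u j) ∈ S)
    (hSL : S ∩ leaderDems d u (j - 1) = ∅)
    (IHprev : ∀ S₂ : Finset (Fin N), S₂.card = r → d q ∈ S₂ →
      (S₂ ∩ leaderDems d u (j - 1)).Nonempty → ∀ V₂ : Finset (Fin K), V₂.card = t →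
      subBlk N K S₂ V₂ ∈ directDec d u r t q jmax) :
    subBlk N K S V ∈ directDec d u r t q jmax := by
  classical
  set J := insert q V with hJ
  set B := S \ J.image d with hB
  have hqJ : q ∈ J := Finset.mem_insert_self _ _
  have hujJ : u j ∈ J := Finset.mem_insert_of_mem hujV
  have hJcard : J.card = t + 1 := by rw [hJ, Finset.card_insert_of_notMem hqV, hV]
  have hr1 : 1 ≤ r := hS ▸ Finset.card_pos.2 ⟨_, hdqS⟩
  have hdqD : d q ∈ J.image d := Finset.mem_image.2 ⟨q, hqJ, rfl⟩
  have hLcap : S ∩ leaderDems d u j ⊆ {d (u j)} := by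
    intro x hx
    obtain ⟨hxS, hxL⟩ := Finset.mem_inter.1 hx
    rw [leaderDems_succ d u h1j] at hxL
    rcases Finset.mem_insert.1 hxL with rfl | hxe
    · exact Finset.mem_singleton_self _
    · exfalso
      have : x ∈ S ∩ leaderDems d u (j - 1) := Finset.mem_inter.2 ⟨hxS, hxe⟩
      rw [hSL] at this
      exact absurd this (Finset.notMem_empty x)
  have hSgroup : S ∈ groupG d u r j J B := by
    refine mem_groupG.2 ⟨hS, ⟨d q, Finset.mem_inter.2 ⟨hdqS, hdqD⟩⟩, ?_, rfl⟩
    calc (S ∩ leaderDems d u j).card ≤ ({d (u j)} : Finset (Fin N)).card :=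
        Finset.card_le_card hLcap
      _ = 1 := Finset.card_singleton _
  have hcT : comb d u r j J B S ∈ transmitted d u r t jmax := by
    refine ⟨j, Finset.mem_Icc.2 ⟨h1j, hjm⟩, J, hJcard, hujJ, ?_, B, S, hSgroup, hdjS, rfl⟩
    intro i hi
    obtain ⟨hi1, hi2⟩ := Finset.mem_Icc.1 hi
    rw [hJ]
    simp only [Finset.mem_insert]
    push_neg
    exact ⟨hqi i hi1 (by omega), hprev i hi1 (by omega)⟩
  have hVJ : V = J.erase q := by rw [hJ, Finset.erase_insert hqV]
  have h1 : comb d u r j J B S (S, V) = 1 := by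
    rw [hVJ]
    exact comb_apply_pilot d u r j J B S hdjS hqJ hdqS
  refine decode_step d u r t q jmax _ hcT S V hdqS h1 ?_
  intro p hne hcne
  obtain ⟨hdisj, k, hkJ, hdkp, hp2⟩ := comb_ne_zero hcne
  rcases Finset.mem_insert.1 hkJ with hkq | hkV
  · -- k = q
    rw [hkq] at hdkp hp2
    have hVp : p.2 = V := by rw [hp2, ← hVJ]
    rcases hdisj with hp1 | ⟨hg, hdjp, hcard⟩
    · exact absurd (Prod.ext hp1 hVp) hne
    · -- cross block with d q ∈ p.1
      have hp1card : p.1.card = r := (mem_groupG.1 hg).1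
      rw [hVp]
      by_cases hNE : (p.1 ∩ leaderDems d u (j - 1)).Nonempty
      · exact IHprev p.1 hp1card hdkp hNE V hV
      · have hempty : p.1 ∩ leaderDems d u j = ∅ := by
          rw [leaderDems_succ d u h1j]
          apply Finset.eq_empty_iff_forall_notMem.2
          intro x hx
          obtain ⟨hxp, hxL⟩ := Finset.mem_inter.1 hx
          rcases Finset.mem_insert.1 hxL with rfl | hxe
          · exact hdjp hxp
          · exact hNE ⟨x, Finset.mem_inter.2 ⟨hxp, hxe⟩⟩
        exact singleComb r t d u q j jmax h1j hjm hqi hdjq V hV hqV hujV hprev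
          p.1 hp1card hdkp hdjp hempty
  · -- k ∈ V : cached
    have hkq : k ≠ q := fun h => hqV (h ▸ hkV)
    have hqp2 : q ∈ p.2 := by
      rw [hp2]; exact Finset.mem_erase.2 ⟨hkq.symm, hqJ⟩
    have hp2card : p.2.card = t := by
      rw [hp2, Finset.card_erase_of_mem hkJ, hJcard]
      omega
    have hp1card : p.1.card = r := by
      rcases hdisj with hp1 | ⟨hg, _, _⟩
      · rw [hp1, hS]
      · exact (mem_groupG.1 hg).1
    exact cache_mem_directDec d u r t q jmax hp1card hp2card hqp2

end CaseOne
section CaseThree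

variable {N K : ℕ}

lemma caseThree (r t : ℕ) (d : Fin K → Fin N) (u : ℕ → Fin K) (q : Fin K)
    (j jmax : ℕ) (h1j : 1 ≤ j) (hjm : j ≤ jmax)
    (hqi : ∀ i, 1 ≤ i → i ≤ j → u i ≠ q)
    (hdjq : d (u j) ≠ d q)
    (huij : ∀ i, 1 ≤ i → i < j → u i ≠ u j)
    (V : Finset (Fin K)) (hV : V.card = t) (hqV : q ∉ V) (hujV : u j ∉ V)
    (hprev : ∀ i, 1 ≤ i → i < j → u i ∉ V)
    (S : Finset (Fin N)) (hS : S.card = r) (hdqS : d q ∈ S) (hdjS : d (u j) ∈ S)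
    (hSL : S ∩ leaderDems d u (j - 1) = ∅)
    (IHprev : ∀ S₂ : Finset (Fin N), S₂.card = r → d q ∈ S₂ →
      (S₂ ∩ leaderDems d u (j - 1)).Nonempty → ∀ V₂ : Finset (Fin K), V₂.card = t →
      subBlk N K S₂ V₂ ∈ directDec d u r t q jmax) :
    subBlk N K S V ∈ directDec d u r t q jmax := by
  classical
  set J := insert (u j) V with hJ
  set B := S \ J.image d with hB
  have hujJ : u j ∈ J := Finset.mem_insert_self _ _
  have hqJ : q ∉ J := by
    rw [hJ]
    simp only [Finset.mem_insert]
    push_neg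
    exact ⟨fun h => (hqi j h1j le_rfl) h.symm, hqV⟩
  have hJcard : J.card = t + 1 := by rw [hJ, Finset.card_insert_of_notMem hujV, hV]
  have hr1 : 1 ≤ r := hS ▸ Finset.card_pos.2 ⟨_, hdqS⟩
  have hdjD : d (u j) ∈ J.image d := Finset.mem_image.2 ⟨u j, hujJ, rfl⟩
  have hLcap : S ∩ leaderDems d u j ⊆ {d (u j)} := by
    intro x hx
    obtain ⟨hxS, hxL⟩ := Finset.mem_inter.1 hx
    rw [leaderDems_succ d u h1j] at hxL
    rcases Finset.mem_insert.1 hxL with rfl | hxe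
    · exact Finset.mem_singleton_self _
    · exfalso
      have : x ∈ S ∩ leaderDems d u (j - 1) := Finset.mem_inter.2 ⟨hxS, hxe⟩
      rw [hSL] at this
      exact absurd this (Finset.notMem_empty x)
  have hSgroup : S ∈ groupG d u r j J B := by
    refine mem_groupG.2 ⟨hS, ⟨d (u j), Finset.mem_inter.2 ⟨hdjS, hdjD⟩⟩, ?_, rfl⟩
    calc (S ∩ leaderDems d u j).card ≤ ({d (u j)} : Finset (Fin N)).card :=
        Finset.card_le_card hLcap
      _ = 1 := Finset.card_singleton _
  have hcT : comb d u r j J B S ∈ transmitted d u r t jmax := by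
    refine ⟨j, Finset.mem_Icc.2 ⟨h1j, hjm⟩, J, hJcard, hujJ, ?_, B, S, hSgroup, hdjS, rfl⟩
    intro i hi
    obtain ⟨hi1, hi2⟩ := Finset.mem_Icc.1 hi
    rw [hJ]
    simp only [Finset.mem_insert]
    push_neg
    exact ⟨huij i hi1 (by omega), hprev i hi1 (by omega)⟩
  have hVJ : V = J.erase (u j) := by rw [hJ, Finset.erase_insert hujV]
  have h1 : comb d u r j J B S (S, V) = 1 := by
    rw [hVJ]
    exact comb_apply_pilot d u r j J B S hdjS hujJ hdjS
  refine decode_step d u r t q jmax _ hcT S V hdqS h1 ?_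
  intro p hne hcne
  obtain ⟨hdisj, k, hkJ, hdkp, hp2⟩ := comb_ne_zero hcne
  rcases Finset.mem_insert.1 hkJ with hkuj | hkV
  · -- k = u j
    rw [hkuj] at hdkp hp2
    have hVp : p.2 = V := by rw [hp2, ← hVJ]
    rcases hdisj with hp1 | ⟨hg, hdjp, _⟩
    · exact absurd (Prod.ext hp1 hVp) hne
    · exact absurd hdkp hdjp
  · -- k ∈ V
    have hkuj : k ≠ u j := fun h => hujV (h ▸ hkV)
    have hqp2 : q ∉ p.2 := by
      rw [hp2]
      intro h
      exact hqJ (Finset.mem_of_mem_erase h)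
    have hujp2 : u j ∈ p.2 := by
      rw [hp2]
      exact Finset.mem_erase.2 ⟨hkuj.symm, hujJ⟩
    have hp2card : p.2.card = t := by
      rw [hp2, Finset.card_erase_of_mem hkJ, hJcard]
      omega
    have hprev2 : ∀ i, 1 ≤ i → i < j → u i ∉ p.2 := by
      intro i a b h
      rw [hp2] at h
      rcases Finset.mem_insert.1 (Finset.mem_of_mem_erase h) with h' | h'
      · exact huij i a b h'
      · exact hprev i a b h'
    rcases hdisj with hp1 | ⟨hg, hdjp, hcard⟩
    · -- p.1 = S : a Case-1 target
      rw [hp1]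
      exact caseOne r t d u q j jmax h1j hjm hqi hdjq p.2 hp2card hqp2 hujp2 hprev2
        S hS hdqS hdjS hSL IHprev
    · -- cross block
      have hp1card : p.1.card = r := (mem_groupG.1 hg).1
      have hdiff1 : (S \ p.1).card = 1 := by
        have h := Finset.card_sdiff_add_card_inter S p.1
        rw [Finset.inter_comm] at h
        omega
      have hSdiff : S \ p.1 = {d (u j)} := by
        obtain ⟨a, ha⟩ := Finset.card_eq_one.1 hdiff1
        have : d (u j) ∈ S \ p.1 := Finset.mem_sdiff.2 ⟨hdjS, hdjp⟩
        rw [ha] at this ⊢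
        rw [Finset.mem_singleton.1 this]
      have hdqp1 : d q ∈ p.1 := by
        by_contra h
        have : d q ∈ S \ p.1 := Finset.mem_sdiff.2 ⟨hdqS, h⟩
        rw [hSdiff, Finset.mem_singleton] at this
        exact hdjq this.symm
      by_cases hNE : (p.1 ∩ leaderDems d u (j - 1)).Nonempty
      · exact IHprev p.1 hp1card hdqp1 hNE p.2 hp2card
      · have hempty : p.1 ∩ leaderDems d u j = ∅ := by
          rw [leaderDems_succ d u h1j]
          apply Finset.eq_empty_iff_forall_notMem.2
          intro x hx
          obtain ⟨hxp, hxL⟩ := Finset.mem_inter.1 hx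
          rcases Finset.mem_insert.1 hxL with rfl | hxe
          · exact hdjp hxp
          · exact hNE ⟨x, Finset.mem_inter.2 ⟨hxp, hxe⟩⟩
        exact singleComb r t d u q j jmax h1j hjm hqi hdjq p.2 hp2card hqp2 hujp2 hprev2
          p.1 hp1card hdqp1 hdjp hempty

end CaseThree
section Main

variable {N K : ℕ}

lemma mainAux (r t : ℕ) (d : Fin K → Fin N) (u : ℕ → Fin K)
    (hLdistinct : ∀ i ∈ Finset.Icc 1 (numDistinct d), ∀ i' ∈ Finset.Icc 1 (numDistinct d),
      i ≠ i' → d (u i) ≠ d (u i'))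
    (q : Fin K) (f : ℕ) (hf1 : 1 ≤ f) (hfnd : f ≤ numDistinct d)
    (hfd : d (u f) = d q) :
    ∀ j, 1 ≤ j → j ≤ f - 1 →
      ∀ S : Finset (Fin N), S.card = r → d q ∈ S → (S ∩ leaderDems d u j).Nonempty →
      ∀ V : Finset (Fin K), V.card = t → subBlk N K S V ∈ directDec d u r t q j := by
  intro j
  induction j using Nat.strong_induction_on with
  | _ j IH =>
  intro h1j hjf S hS hdqS hSL V hV
  classical
  have hnd : ∀ i, 1 ≤ i → i ≤ f - 1 → d (u i) ≠ d q := by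
    intro i hi1 hif h
    refine hLdistinct i (Finset.mem_Icc.2 ⟨hi1, by omega⟩) f
      (Finset.mem_Icc.2 ⟨hf1, hfnd⟩) (by omega) ?_
    rw [h, hfd]
  have hqi : ∀ i, 1 ≤ i → i ≤ j → u i ≠ q := by
    intro i hi1 hij h
    exact hnd i hi1 (le_trans hij hjf) (by rw [h])
  have huij : ∀ i, 1 ≤ i → i < j → u i ≠ u j := by
    intro i hi1 hij h
    refine hLdistinct i (Finset.mem_Icc.2 ⟨hi1, by omega⟩) j
      (Finset.mem_Icc.2 ⟨h1j, by omega⟩) (by omega) ?_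
    rw [h]
  have hdjq : d (u j) ≠ d q := hnd j h1j hjf
  by_cases hqV : q ∈ V
  · exact cache_mem_directDec d u r t q j hS hV hqV
  have hL0 : j = 1 → leaderDems d u (j - 1) = ∅ := by
    intro h
    rw [h]
    simp [leaderDems]
  by_cases hprevNE : (S ∩ leaderDems d u (j - 1)).Nonempty
  · rcases Nat.lt_or_ge j 2 with hj2 | hj2
    · exfalso
      rw [hL0 (by omega), Finset.inter_empty] at hprevNE
      exact Finset.not_nonempty_empty hprevNE
    · exact directDec_mono d u r t q (by omega : j - 1 ≤ j)
        (IH (j - 1) (by omega) (by omega) (by omega) S hS hdqS hprevNE V hV)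
  have hSLprev : S ∩ leaderDems d u (j - 1) = ∅ := Finset.not_nonempty_iff_eq_empty.1 hprevNE
  have hdjS : d (u j) ∈ S := by
    obtain ⟨x, hx⟩ := hSL
    obtain ⟨hxS, hxL⟩ := Finset.mem_inter.1 hx
    rw [leaderDems_succ d u h1j] at hxL
    rcases Finset.mem_insert.1 hxL with rfl | hxe
    · exact hxS
    · exfalso
      have : x ∈ S ∩ leaderDems d u (j - 1) := Finset.mem_inter.2 ⟨hxS, hxe⟩
      rw [hSLprev] at this
      exact absurd this (Finset.notMem_empty x)
  have IHprev : ∀ S₂ : Finset (Fin N), S₂.card = r → d q ∈ S₂ →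
      (S₂ ∩ leaderDems d u (j - 1)).Nonempty → ∀ V₂ : Finset (Fin K), V₂.card = t →
      subBlk N K S₂ V₂ ∈ directDec d u r t q j := by
    intro S₂ h1 h2 h3 V₂ h4
    rcases Nat.lt_or_ge j 2 with hj2 | hj2
    · exfalso
      rw [hL0 (by omega), Finset.inter_empty] at h3
      exact Finset.not_nonempty_empty h3
    · exact directDec_mono d u r t q (by omega : j - 1 ≤ j)
        (IH (j - 1) (by omega) (by omega) (by omega) S₂ h1 h2 h3 V₂ h4)
  by_cases hEx : ∃ i, 1 ≤ i ∧ i < j ∧ u i ∈ V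
  · -- an earlier leader lies in V : single-combination decoding at its step
    have hspec := Nat.find_spec hEx
    set i₀ := Nat.find hEx with hi₀
    obtain ⟨hi01, hi0j, hui0V⟩ := hspec
    have hmin : ∀ i', 1 ≤ i' → i' < i₀ → u i' ∉ V := by
      intro i' h1' h2' hmem
      exact Nat.find_min hEx h2' ⟨h1', by omega, hmem⟩
    have hdi0L : d (u i₀) ∈ leaderDems d u (j - 1) :=
      mem_leaderDems.2 ⟨i₀, hi01, by omega, rfl⟩
    have hdi0S : d (u i₀) ∉ S := by
      intro h
      have : d (u i₀) ∈ S ∩ leaderDems d u (j - 1) := Finset.mem_inter.2 ⟨h, hdi0L⟩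
      rw [hSLprev] at this
      exact absurd this (Finset.notMem_empty _)
    have hSL0 : S ∩ leaderDems d u i₀ = ∅ := by
      apply Finset.eq_empty_iff_forall_notMem.2
      intro x hx
      obtain ⟨hxS, hxL⟩ := Finset.mem_inter.1 hx
      have : x ∈ S ∩ leaderDems d u (j - 1) :=
        Finset.mem_inter.2 ⟨hxS, leaderDems_mono d u (by omega : i₀ ≤ j - 1) hxL⟩
      rw [hSLprev] at this
      exact absurd this (Finset.notMem_empty x)
    exact singleComb r t d u q i₀ j hi01 (by omega)
      (fun i a b => hqi i a (by omega)) (hnd i₀ hi01 (by omega))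
      V hV hqV hui0V hmin S hS hdqS hdi0S hSL0
  · push_neg at hEx
    have hprevV : ∀ i, 1 ≤ i → i < j → u i ∉ V := fun i a b => hEx i a b
    by_cases hujV : u j ∈ V
    · exact caseOne r t d u q j j h1j le_rfl hqi hdjq V hV hqV hujV hprevV
        S hS hdqS hdjS hSLprev IHprev
    · exact caseThree r t d u q j j h1j le_rfl hqi hdjq huij V hV hqV hujV hprevV
        S hS hdqS hdjS hSLprev IHprev

end Main
theorem statement10 (N K r t : ℕ) (hN : 1 ≤ N) (hK : 1 ≤ K) (hr : 1 ≤ r) (hrN : r ≤ N)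
    (htK : t ≤ K)
    (d : Fin K → Fin N) (u : ℕ → Fin K)
    (hLdistinct : ∀ i ∈ Finset.Icc 1 (numDistinct d), ∀ i' ∈ Finset.Icc 1 (numDistinct d),
      i ≠ i' → d (u i) ≠ d (u i'))
    (hLcover : ∀ k : Fin K, ∃ i ∈ Finset.Icc 1 (numDistinct d), d (u i) = d k)
    -- a user `q` whose demanded file is the one demanded by leader `u_{g(d_q)}`,
    -- where `g(d_q) = f`
    (q : Fin K) (f : ℕ) (hf : f ∈ Finset.Icc 1 (numDistinct d)) (hfd : d (u f) = d q)
    (j : ℕ) (hj : j ∈ Finset.Icc 1 (min (N - r + 1) (min (K - t) (f - 1)))) :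
    -- at the end of step `j`, user `q` directly decodes every entire block `W_S` with
    -- `d_q ∈ S` and `S ∩ {d_{u_1},…,d_{u_j}} ≠ ∅` (i.e. all of its sub-blocks)
    ∀ S : Finset (Fin N), S.card = r → d q ∈ S → (S ∩ leaderDems d u j).Nonempty →
      ∀ V : Finset (Fin K), V.card = t → subBlk N K S V ∈ directDec d u r t q j := by
  obtain ⟨hf1, hfnd⟩ := Finset.mem_Icc.1 hf
  obtain ⟨h1j, hj2⟩ := Finset.mem_Icc.1 hj
  have hjf : j ≤ f - 1 := le_trans hj2 (le_trans (min_le_right _ _) (min_le_right _ _))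
  intro S hS hdq hSL V hV
  exact mainAux r t d u hLdistinct q f hf1 hfnd hfd j h1j hjf S hS hdq hSL V hV
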